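/- Fix a ∈ 𝔻 and β ∈ ℂ, β ≠ 0. Then the subspace Y = { u ⊕ β·u(a)·k : u ∈ H² }, where k(e^{it}) = e^{-it}/(1 − a e^{-it}) ∈ H²₋, is a closed subspace of H² ⊕ H²₋ invariant under S ⊕ S₊, and Y is not of the form X ⊕ X′ with X ⊆ H², X′ ⊆ H²₋ (it is nonsplitting). -/

import Mathlib

open MeasureTheory Complex Real
open scoped ComplexConjugate ENNReal

noncomputable section

namespace SS

abbrev T : ℝ := 2 * Real.pi

instance : Fact (0 < T) := ⟨by positivity⟩

/-- Normalized Haar (Lebesgue) measure on the circle. -/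
abbrev μ : Measure (AddCircle T) := AddCircle.haarAddCircle

/-- The space `L²` of the circle. -/
abbrev L2 := Lp ℂ 2 μ

/-- The Hardy space `H²`: the closed span of the nonnegative Fourier modes. -/
def H2 : Submodule ℂ L2 :=
  (Submodule.span ℂ {f : L2 | ∃ n : ℕ, f = fourierLp 2 (n : ℤ)}).topologicalClosure

instance : CompleteSpace H2 :=
  (Submodule.isClosed_topologicalClosure _).completeSpace_coe

/-- `H²₋ = L² ⊖ H²`. -/
def H2m : Submodule ℂ L2 := H2ᗮ

instance : CompleteSpace H2m :=
  (Submodule.isClosed_orthogonal H2).completeSpace_coe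

/-- Orthogonal projection `P₊` of `L²` onto `H²`, seen as an operator on `L²`. -/
def Pplus : L2 →ₗ[ℂ] L2 := H2.subtype.comp (Submodule.orthogonalProjectionOnto H2).toLinearMap

/-- Orthogonal projection `P₋` of `L²` onto `H²₋`, seen as an operator on `L²`. -/
def Pminus : L2 →ₗ[ℂ] L2 := H2m.subtype.comp (Submodule.orthogonalProjectionOnto H2m).toLinearMap

theorem memL2_mul_of_bound {φ : AddCircle T → ℂ} (hm : AEStronglyMeasurable φ μ)
    {C : ℝ} (hb : ∀ᵐ t ∂μ, ‖φ t‖ ≤ C) (f : L2) :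
    MemLp (fun t => φ t * (f : AddCircle T → ℂ) t) 2 μ := by
  have h1 : MemLp φ ∞ μ := memLp_top_of_bound hm C hb
  exact (Lp.memLp f).mul' (r := 2) h1

/-- Multiplication by a bounded measurable function, as an operator on `L²`. -/
def mulOp (φ : AddCircle T → ℂ) (hm : AEStronglyMeasurable φ μ)
    {C : ℝ} (hb : ∀ᵐ t ∂μ, ‖φ t‖ ≤ C) : L2 →ₗ[ℂ] L2 where
  toFun f := (memL2_mul_of_bound hm hb f).toLp _
  map_add' f g := by
    apply Lp.ext
    filter_upwards [MemLp.coeFn_toLp (memL2_mul_of_bound hm hb (f + g)),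
      MemLp.coeFn_toLp (memL2_mul_of_bound hm hb f),
      MemLp.coeFn_toLp (memL2_mul_of_bound hm hb g),
      Lp.coeFn_add ((memL2_mul_of_bound hm hb f).toLp _)
        ((memL2_mul_of_bound hm hb g).toLp _),
      Lp.coeFn_add f g] with t h1 h2 h3 h4 h5
    simp only [h1, h4, Pi.add_apply, h2, h3, h5]
    ring
  map_smul' c f := by
    apply Lp.ext
    filter_upwards [MemLp.coeFn_toLp (memL2_mul_of_bound hm hb (c • f)),
      MemLp.coeFn_toLp (memL2_mul_of_bound hm hb f),
      Lp.coeFn_smul c ((memL2_mul_of_bound hm hb f).toLp _),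
      Lp.coeFn_smul c f] with t h1 h2 h3 h4
    simp only [RingHom.id_apply, h1, h3, Pi.smul_apply, h2, h4, smul_eq_mul]
    ring

/-- The function `e^{it}` on the circle. -/
def φz : AddCircle T → ℂ := fun t => fourier 1 t

theorem φz_meas : AEStronglyMeasurable φz μ := (fourier 1).continuous.aestronglyMeasurable

theorem φz_bound : ∀ᵐ t ∂μ, ‖φz t‖ ≤ 1 :=
  Filter.Eventually.of_forall fun t => le_of_eq (Circle.norm_coe _)

/-- Multiplication by `z = e^{it}` on `L²`. -/
def Mz : L2 →ₗ[ℂ] L2 := mulOp φz φz_meas φz_bound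

/-- The operator `S ⊕ S₊` on `L² = H² ⊕ H²₋` (internal orthogonal decomposition):
it acts as `Mz` on the `H²`-component and as `P₋ Mz` on the `H²₋`-component. -/
def D : L2 →ₗ[ℂ] L2 := Mz.comp Pplus + (Pminus.comp (Mz.comp Pminus))

/-- The set `φ·M ⊆ L²`, for a function `φ` on the circle and a set `M ⊆ L²`,
defined via a.e. representatives. -/
def mulSet (φ : AddCircle T → ℂ) (M : Set L2) : Set L2 :=
  {g | ∃ f ∈ M, ⇑g =ᵐ[μ] fun t => φ t * f t}

/-- The model space `K_θ = H² ⊖ θH²`, as a subset of `L²`. -/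
def Kset (θ : AddCircle T → ℂ) : Set L2 :=
  {f | f ∈ H2 ∧ ∀ g ∈ mulSet θ (H2 : Set L2), inner (𝕜 := ℂ) g f = 0}

/-- `θ` is (the boundary function of) an inner function: it is measurable, its negative
Fourier coefficients vanish (i.e. it belongs to `H²`, hence to `H^∞`), and it has
unimodular boundary values a.e. -/
structure IsInner (θ : AddCircle T → ℂ) : Prop where
  meas : AEStronglyMeasurable θ μ
  coeff : ∀ n : ℤ, n < 0 → fourierCoeff θ n = 0
  unimod : ∀ᵐ t ∂μ, ‖θ t‖ = 1

/-- `φ` is (the boundary function of) an element of the closed unit ball of `H^∞`. -/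
structure MemBallHinf (φ : AddCircle T → ℂ) : Prop where
  meas : AEStronglyMeasurable φ μ
  coeff : ∀ n : ℤ, n < 0 → fourierCoeff φ n = 0
  bound : ∀ᵐ t ∂μ, ‖φ t‖ ≤ 1

theorem IsInner.memBall {θ : AddCircle T → ℂ} (h : IsInner θ) : MemBallHinf θ :=
  ⟨h.meas, h.coeff, h.unimod.mono fun _ ht => le_of_eq ht⟩

theorem aeNeg {g g' : AddCircle T → ℂ} (h : g =ᵐ[μ] g') :
    (fun t => g (-t)) =ᵐ[μ] fun t => g' (-t) :=
  (Measure.measurePreserving_neg μ).quasiMeasurePreserving.ae_eq_comp h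

theorem memL2_J (f : L2) :
    MemLp (fun t => (fourier (-1) t : ℂ) * (f : L2) (-t)) 2 μ := by
  have h1 : MemLp (fun t : AddCircle T => (f : L2) (-t)) 2 μ :=
    (Lp.memLp f).comp_measurePreserving (Measure.measurePreserving_neg μ)
  have h2 : MemLp (fun t : AddCircle T => (fourier (-1) t : ℂ)) ∞ μ :=
    memLp_top_of_bound (fourier (-1)).continuous.aestronglyMeasurable 1
      (Filter.Eventually.of_forall fun _ => le_of_eq (Circle.norm_coe _))
  exact h1.mul' (r := 2) h2

/-- The operator `J` on `L²`: `(Jf)(e^{it}) = e^{-it} f(e^{-it})`. -/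
def Jop : L2 →ₗ[ℂ] L2 where
  toFun f := (memL2_J f).toLp _
  map_add' f g := by
    apply Lp.ext
    filter_upwards [MemLp.coeFn_toLp (memL2_J (f + g)), MemLp.coeFn_toLp (memL2_J f),
      MemLp.coeFn_toLp (memL2_J g),
      Lp.coeFn_add ((memL2_J f).toLp _) ((memL2_J g).toLp _),
      aeNeg (Lp.coeFn_add f g)] with t h1 h2 h3 h4 h5
    simp only [h1, h4, Pi.add_apply, h2, h3, h5]
    ring
  map_smul' c f := by
    apply Lp.ext
    filter_upwards [MemLp.coeFn_toLp (memL2_J (c • f)), MemLp.coeFn_toLp (memL2_J f),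
      Lp.coeFn_smul c ((memL2_J f).toLp _),
      aeNeg (Lp.coeFn_smul c f)] with t h1 h2 h3 h4
    simp only [RingHom.id_apply, h1, h3, Pi.smul_apply, h2, h4, smul_eq_mul]
    ring

/-- The subspace `Y = {(θ₂₁u₁+θ₂₂u₂) ⊕ P₋(conj θ₁₁ u₁ + conj θ₁₂ u₂) : u₁,u₂ ∈ H²}`
inside `L² = H² ⊕ H²₋` (internal orthogonal decomposition). -/
def YSet (θ11 θ12 θ21 θ22 : AddCircle T → ℂ) : Set L2 :=
  {y | ∃ u1 ∈ (H2 : Set L2), ∃ u2 ∈ (H2 : Set L2), ∃ g h : L2, g ∈ H2 ∧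
    (⇑g =ᵐ[μ] fun t => θ21 t * u1 t + θ22 t * u2 t) ∧
    (⇑h =ᵐ[μ] fun t => (starRingEnd ℂ) (θ11 t) * u1 t + (starRingEnd ℂ) (θ12 t) * u2 t) ∧
    y = g + Pminus h}

/-- `g` is (the boundary function of) an outer function:
`log |g(0)| = ∫ log |g| dm`, where `g(0)` is the 0-th Fourier coefficient. -/
structure IsOuter (g : AddCircle T → ℂ) : Prop where
  meas : AEStronglyMeasurable g μ
  coeff : ∀ n : ℤ, n < 0 → fourierCoeff g n = 0
  ne_zero : ¬ g =ᵐ[μ] 0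
  outer : Real.log ‖fourierCoeff g 0‖ = ∫ t, Real.log ‖g t‖ ∂μ

/-! ### Auxiliary lemmas for Statement 16 -/

section Aux16

lemma norm_fourier_apply (n : ℤ) (t : AddCircle T) : ‖(fourier n t : ℂ)‖ = 1 :=
  Circle.norm_coe _

lemma fourier_mul (m n : ℤ) (t : AddCircle T) :
    (fourier m t : ℂ) * fourier n t = fourier (m + n) t :=
  fourier_add.symm

variable {b : ℂ}

lemma denom_ne (hb : ‖b‖ < 1) (d : ℤ) (t : AddCircle T) :
    (1 : ℂ) - b * fourier d t ≠ 0 := by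
  intro h
  rw [sub_eq_zero] at h
  have h1 : ‖b * fourier d t‖ = ‖b‖ := by rw [norm_mul, norm_fourier_apply, mul_one]
  rw [← h, norm_one] at h1
  linarith

lemma inv_den_norm_le (hb : ‖b‖ < 1) (d : ℤ) (t : AddCircle T) :
    ‖((1 : ℂ) - b * fourier d t)⁻¹‖ ≤ (1 - ‖b‖)⁻¹ := by
  rw [norm_inv]
  have h0 : (0 : ℝ) < 1 - ‖b‖ := by linarith
  have h1 : 1 - ‖b‖ ≤ ‖(1 : ℂ) - b * fourier d t‖ := by
    have h2 := norm_sub_norm_le (1 : ℂ) (b * fourier d t)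
    rw [norm_one, norm_mul, norm_fourier_apply, mul_one] at h2
    linarith
  gcongr

lemma cont_inv_den (hb : ‖b‖ < 1) (d : ℤ) :
    Continuous fun t : AddCircle T => ((1 : ℂ) - b * fourier d t)⁻¹ :=
  (continuous_const.sub (continuous_const.mul (fourier d).continuous)).inv₀ (denom_ne hb d)

lemma integrable_fi (hb : ‖b‖ < 1) (m d : ℤ) :
    Integrable (fun t => (fourier m t : ℂ) * ((1 : ℂ) - b * fourier d t)⁻¹) μ := by
  have hc : Continuous fun t : AddCircle T =>
      (fourier m t : ℂ) * ((1 : ℂ) - b * fourier d t)⁻¹ :=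
    (fourier m).continuous.mul (cont_inv_den hb d)
  have hm : MemLp (fun t : AddCircle T =>
      (fourier m t : ℂ) * ((1 : ℂ) - b * fourier d t)⁻¹) ∞ μ :=
    memLp_top_of_bound hc.aestronglyMeasurable ((1 - ‖b‖)⁻¹)
      (Filter.Eventually.of_forall fun t => by
        rw [norm_mul, norm_fourier_apply, one_mul]; exact inv_den_norm_le hb d t)
  exact hm.integrable le_top

lemma integral_fourier_ne_zero {m : ℤ} (hm : m ≠ 0) :
    ∫ t, (fourier m t : ℂ) ∂μ = 0 :=
  integral_eq_zero_of_add_right_eq_neg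
    (fun x => fourier_add_half_inv_index hm (by positivity) x)

lemma integral_fourier_zero_idx : ∫ t, (fourier 0 t : ℂ) ∂μ = 1 := by
  have h : ∀ t : AddCircle T, (fourier 0 t : ℂ) = 1 := fun t => fourier_zero
  simp only [h]
  simp [measure_univ]

/-- The fundamental integral family. -/
def FF (b : ℂ) (d m : ℤ) : ℂ :=
  ∫ t, (fourier m t : ℂ) * ((1 : ℂ) - b * fourier d t)⁻¹ ∂μ

lemma FF_rec (hb : ‖b‖ < 1) (d m : ℤ) :
    FF b d m = (∫ t, (fourier m t : ℂ) ∂μ) + b * FF b d (m + d) := by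
  have key : ∀ t : AddCircle T, (fourier m t : ℂ) * ((1 : ℂ) - b * fourier d t)⁻¹
      = fourier m t + b * ((fourier (m + d) t : ℂ) * ((1 : ℂ) - b * fourier d t)⁻¹) := by
    intro t
    have hne := denom_ne hb d t
    have h2 : ((1 : ℂ) - b * fourier d t) * ((1 : ℂ) - b * fourier d t)⁻¹ = 1 :=
      mul_inv_cancel₀ hne
    rw [← fourier_mul m d t]
    linear_combination (fourier m t : ℂ) * h2
  have hint1 : Integrable (fun t : AddCircle T => (fourier m t : ℂ)) μ := by
    have := memLp_top_of_bound (μ := μ) (f := fun t : AddCircle T => (fourier m t : ℂ))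
      (fourier m).continuous.aestronglyMeasurable 1
      (Filter.Eventually.of_forall fun t => le_of_eq (norm_fourier_apply m t))
    exact this.integrable le_top
  have hint2 : Integrable (fun t : AddCircle T =>
      b * ((fourier (m + d) t : ℂ) * ((1 : ℂ) - b * fourier d t)⁻¹)) μ :=
    (integrable_fi hb (m + d) d).const_mul b
  rw [FF]
  simp only [key]
  rw [integral_add hint1 hint2, integral_const_mul]
  rfl

lemma FF_bound (hb : ‖b‖ < 1) (d m : ℤ) : ‖FF b d m‖ ≤ (1 - ‖b‖)⁻¹ := by
  have h := norm_integral_le_of_norm_le_const (μ := μ)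
    (f := fun t => (fourier m t : ℂ) * ((1 : ℂ) - b * fourier d t)⁻¹) (C := (1 - ‖b‖)⁻¹)
    (Filter.Eventually.of_forall fun t => by
      rw [norm_mul, norm_fourier_apply, one_mul]; exact inv_den_norm_le hb d t)
  simpa [FF, measure_univ, measureReal_def] using h

lemma FF_vanish (hb : ‖b‖ < 1) {d m : ℤ} (h : ∀ k : ℕ, m + (k : ℤ) * d ≠ 0) :
    FF b d m = 0 := by
  have hstep : ∀ k : ℕ, FF b d m = b ^ k * FF b d (m + (k : ℤ) * d) := by
    intro k
    induction k with
    | zero => simp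
    | succ n ih =>
      have hidx : (m + (n : ℤ) * d) + d = m + ((n + 1 : ℕ) : ℤ) * d := by push_cast; ring
      have hm0 : m + (n : ℤ) * d ≠ 0 := h n
      rw [ih, FF_rec hb d (m + (n : ℤ) * d), integral_fourier_ne_zero hm0, zero_add, hidx,
        pow_succ]
      ring
  have hnorm : ∀ k : ℕ, ‖FF b d m‖ ≤ ‖b‖ ^ k * (1 - ‖b‖)⁻¹ := fun k => by
    rw [hstep k, norm_mul, norm_pow]
    exact mul_le_mul_of_nonneg_left (FF_bound hb d _) (by positivity)
  have hlim : Filter.Tendsto (fun k : ℕ => ‖b‖ ^ k * (1 - ‖b‖)⁻¹)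
      Filter.atTop (nhds 0) := by
    simpa using
      (tendsto_pow_atTop_nhds_zero_of_lt_one (norm_nonneg b) hb).mul_const ((1 - ‖b‖)⁻¹)
  have hle : ‖FF b d m‖ ≤ 0 := ge_of_tendsto' hlim hnorm
  simpa using le_antisymm hle (norm_nonneg _)

lemma FF_zero_eq_one (hb : ‖b‖ < 1) {d : ℤ} (hd : d ≠ 0) : FF b d 0 = 1 := by
  have h1 : FF b d (0 + d) = 0 := by
    apply FF_vanish hb
    intro k hc
    apply hd
    have h2 : ((k : ℤ) + 1) * d = 0 := by linarith
    rcases mul_eq_zero.mp h2 with h | h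
    · exfalso; omega
    · exact h
  rw [FF_rec hb d 0, h1, mul_zero, add_zero, integral_fourier_zero_idx]

/-! ### `H²` facts -/

lemma fourierLp_mem_H2 (n : ℕ) : (fourierLp 2 (n : ℤ) : L2) ∈ H2 :=
  Submodule.le_topologicalClosure _ (Submodule.subset_span ⟨n, rfl⟩)

lemma inner_fourierLp (x : L2) (n : ℤ) :
    inner (𝕜 := ℂ) ((fourierLp 2 n : L2)) x = fourierCoeff (⇑x) n := by
  have h1 : (fourierLp 2 n : L2) = fourierBasis n := by rw [coe_fourierBasis]
  rw [h1, ← fourierBasis.repr_apply_apply, fourierBasis_repr]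

lemma mem_H2m_of_coeff {x : L2} (h : ∀ n : ℕ, fourierCoeff (⇑x) (n : ℤ) = 0) :
    x ∈ H2m := by
  rw [H2m, Submodule.mem_orthogonal]
  intro u hu
  have hc : IsClosed {u : L2 | inner (𝕜 := ℂ) u x = 0} :=
    isClosed_eq (continuous_id.inner continuous_const) continuous_const
  have hspan : (Submodule.span ℂ {f : L2 | ∃ n : ℕ, f = fourierLp 2 (n : ℤ)} : Set L2)
      ⊆ {u : L2 | inner (𝕜 := ℂ) u x = 0} := by
    intro u hu
    induction hu using Submodule.span_induction with
    | mem u hu => obtain ⟨n, rfl⟩ := hu; simpa [inner_fourierLp] using h n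
    | zero => simp
    | add u v _ _ hu hv => rw [Set.mem_setOf_eq, inner_add_left, hu, hv, add_zero]
    | smul c u _ hu => rw [Set.mem_setOf_eq, inner_smul_left, hu, mul_zero]
  have hu' : u ∈ closure (Submodule.span ℂ
      {f : L2 | ∃ n : ℕ, f = fourierLp 2 (n : ℤ)} : Set L2) := by
    rw [← Submodule.topologicalClosure_coe]; exact hu
  exact closure_minimal hspan hc hu'

lemma inner_eq_zero_of_H2m {x u : L2} (hx : x ∈ H2m) (hu : u ∈ H2) :
    inner (𝕜 := ℂ) x u = 0 := by
  have := (Submodule.mem_orthogonal H2 x).mp hx u hu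
  rw [← inner_conj_symm, this, map_zero]

/-! ### Multiplication by `z` -/

lemma Mz_coeFn (f : L2) : ⇑(Mz f) =ᵐ[μ] fun t => φz t * (f : AddCircle T → ℂ) t :=
  (memL2_mul_of_bound φz_meas φz_bound f).coeFn_toLp

lemma Mz_norm_le (f : L2) : ‖Mz f‖ ≤ ‖f‖ := by
  have h1 : Mz f = MemLp.toLp (fun t => φz t * (f : AddCircle T → ℂ) t)
      (memL2_mul_of_bound φz_meas φz_bound f) := rfl
  rw [h1, Lp.norm_toLp, Lp.norm_def]
  apply ENNReal.toReal_mono (Lp.eLpNorm_ne_top f)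
  apply eLpNorm_mono_ae
  apply Filter.Eventually.of_forall
  intro t
  apply le_of_eq
  rw [norm_mul, show φz t = fourier 1 t from rfl, norm_fourier_apply, one_mul]

/-- `Mz` as a continuous linear map. -/
def MzC : L2 →L[ℂ] L2 := LinearMap.mkContinuous Mz 1 fun f => by simpa using Mz_norm_le f

lemma MzC_apply (f : L2) : MzC f = Mz f := rfl

lemma Mz_fourierLp (n : ℤ) : Mz (fourierLp 2 n : L2) = (fourierLp 2 (n + 1) : L2) := by
  apply Lp.ext
  filter_upwards [Mz_coeFn (fourierLp 2 n), coeFn_fourierLp 2 n, coeFn_fourierLp 2 (n + 1)]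
    with t h1 h2 h3
  rw [h1, h2, h3, show φz t = fourier 1 t from rfl, fourier_mul, add_comm]

lemma Mz_mem_H2 {u : L2} (hu : u ∈ H2) : Mz u ∈ H2 := by
  have hspan : ∀ v ∈ Submodule.span ℂ {f : L2 | ∃ n : ℕ, f = fourierLp 2 (n : ℤ)},
      Mz v ∈ Submodule.span ℂ {f : L2 | ∃ n : ℕ, f = fourierLp 2 (n : ℤ)} := by
    intro v hv
    induction hv using Submodule.span_induction with
    | mem v hv =>
      obtain ⟨n, rfl⟩ := hv
      refine Submodule.subset_span ⟨n + 1, ?_⟩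
      rw [Mz_fourierLp]; push_cast; rfl
    | zero => rw [map_zero]; exact Submodule.zero_mem _
    | add u v _ _ hu hv => rw [map_add]; exact Submodule.add_mem _ hu hv
    | smul c v _ hv => rw [LinearMap.map_smul]; exact Submodule.smul_mem _ c hv
  have hu' : u ∈ closure ((Submodule.span ℂ
      {f : L2 | ∃ n : ℕ, f = fourierLp 2 (n : ℤ)} : Submodule ℂ L2) : Set L2) := by
    rw [← Submodule.topologicalClosure_coe]; exact hu
  have h2 : Mz u ∈ closure (⇑MzC '' ((Submodule.span ℂ
      {f : L2 | ∃ n : ℕ, f = fourierLp 2 (n : ℤ)} : Submodule ℂ L2) : Set L2)) :=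
    image_closure_subset_closure_image MzC.continuous ⟨u, hu', rfl⟩
  have h3 : (⇑MzC '' ((Submodule.span ℂ
      {f : L2 | ∃ n : ℕ, f = fourierLp 2 (n : ℤ)} : Submodule ℂ L2) : Set L2))
      ⊆ (H2 : Set L2) := by
    rintro _ ⟨v, hv, rfl⟩
    exact Submodule.le_topologicalClosure _ (hspan v hv)
  exact closure_minimal h3 (Submodule.isClosed_topologicalClosure _) h2

/-! ### Projection facts -/

lemma Pplus_eq_self {u : L2} (hu : u ∈ H2) : Pplus u = u :=
  Submodule.starProjection_eq_self_iff.mpr hu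

lemma Pplus_eq_zero {x : L2} (hx : x ∈ H2m) : Pplus x = 0 := by
  show ((Submodule.orthogonalProjectionOnto H2 x : H2) : L2) = 0
  rw [Submodule.orthogonalProjectionOnto_apply_of_mem_orthogonal hx]
  rfl

lemma Pplus_mem (y : L2) : Pplus y ∈ H2 := (Submodule.orthogonalProjectionOnto H2 y).2

lemma mem_H2m_orth {u : L2} (hu : u ∈ H2) : u ∈ H2mᗮ :=
  Submodule.le_orthogonal_orthogonal H2 hu

lemma Pminus_eq_zero {u : L2} (hu : u ∈ H2) : Pminus u = 0 := by
  show ((Submodule.orthogonalProjectionOnto H2m u : H2m) : L2) = 0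
  rw [Submodule.orthogonalProjectionOnto_apply_of_mem_orthogonal (mem_H2m_orth hu)]
  rfl

lemma Pminus_eq_self {x : L2} (hx : x ∈ H2m) : Pminus x = x :=
  Submodule.starProjection_eq_self_iff.mpr hx

/-- `P₊` as a continuous linear map. -/
def PplusC : L2 →L[ℂ] L2 := H2.subtypeL.comp (Submodule.orthogonalProjectionOnto H2)

lemma PplusC_apply (y : L2) : PplusC y = Pplus y := rfl

/-! ### Facts about `ka` and `km` -/

lemma km_coeff {a : ℂ} (ha : ‖a‖ < 1) {km : L2}
    (hkm : ⇑km =ᵐ[μ] fun t => (fourier (-1) t : ℂ) * (1 - a * fourier (-1) t)⁻¹) (n : ℤ) :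
    fourierCoeff (⇑km) n = FF a (-1) (-n + -1) := by
  rw [fourierCoeff, FF]
  refine integral_congr_ae ?_
  filter_upwards [hkm] with t ht
  rw [smul_eq_mul, ht, ← mul_assoc, fourier_mul]

lemma km_mem_H2m {a : ℂ} (ha : ‖a‖ < 1) {km : L2}
    (hkm : ⇑km =ᵐ[μ] fun t => (fourier (-1) t : ℂ) * (1 - a * fourier (-1) t)⁻¹) :
    km ∈ H2m := by
  apply mem_H2m_of_coeff
  intro n
  rw [km_coeff ha hkm]
  apply FF_vanish ha
  intro k
  have h1 : (k : ℤ) * (-1) = -(k : ℤ) := by ring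
  rw [h1]
  omega

lemma km_coeff_neg_one {a : ℂ} (ha : ‖a‖ < 1) {km : L2}
    (hkm : ⇑km =ᵐ[μ] fun t => (fourier (-1) t : ℂ) * (1 - a * fourier (-1) t)⁻¹) :
    fourierCoeff (⇑km) (-1) = 1 := by
  have h0 : (-(-1 : ℤ) + -1) = 0 := by norm_num
  rw [km_coeff ha hkm, h0]
  exact FF_zero_eq_one ha (by norm_num)

lemma km_ne_zero {a : ℂ} (ha : ‖a‖ < 1) {km : L2}
    (hkm : ⇑km =ᵐ[μ] fun t => (fourier (-1) t : ℂ) * (1 - a * fourier (-1) t)⁻¹) :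
    km ≠ 0 := by
  intro h
  have h1 := km_coeff_neg_one ha hkm
  rw [h] at h1
  have h2 : fourierCoeff (⇑(0 : L2)) (-1 : ℤ) = 0 := by
    rw [fourierCoeff]
    have h3 : (fun t : AddCircle T => (fourier (-(-1)) t : ℂ) • (⇑(0 : L2)) t)
        =ᵐ[μ] fun _ => (0 : ℂ) := by
      filter_upwards [Lp.coeFn_zero ℂ 2 μ] with t ht
      simp [ht]
    rw [integral_congr_ae h3, integral_zero]
  rw [h2] at h1
  exact zero_ne_one (α := ℂ) h1

lemma ka_coeff_zero {a : ℂ} (ha : ‖a‖ < 1) {ka : L2}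
    (hka : ⇑ka =ᵐ[μ] fun t => ((1 : ℂ) - (starRingEnd ℂ) a * fourier 1 t)⁻¹) :
    fourierCoeff (⇑ka) 0 = 1 := by
  have hb : ‖(starRingEnd ℂ) a‖ < 1 := by rwa [RCLike.norm_conj]
  have h1 : fourierCoeff (⇑ka) 0 = FF ((starRingEnd ℂ) a) 1 0 := by
    rw [fourierCoeff, FF]
    refine integral_congr_ae ?_
    filter_upwards [hka] with t ht
    rw [smul_eq_mul, ht]
    norm_num
  rw [h1]
  exact FF_zero_eq_one hb one_ne_zero

lemma ka_not_mem_H2m {a : ℂ} (ha : ‖a‖ < 1) {ka : L2}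
    (hka : ⇑ka =ᵐ[μ] fun t => ((1 : ℂ) - (starRingEnd ℂ) a * fourier 1 t)⁻¹) :
    ka ∉ H2m := by
  intro h
  have hf0 : (fourierLp 2 (0 : ℤ) : L2) ∈ H2 := by
    simpa using fourierLp_mem_H2 0
  have h1 := inner_eq_zero_of_H2m h hf0
  have h2 : inner (𝕜 := ℂ) ((fourierLp 2 (0 : ℤ)) : L2) ka = fourierCoeff (⇑ka) 0 :=
    inner_fourierLp ka 0
  rw [ka_coeff_zero ha hka, ← inner_conj_symm, h1, map_zero] at h2
  exact zero_ne_one h2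

lemma inner_ka_eq {a : ℂ} (ha : ‖a‖ < 1) {ka : L2}
    (hka : ⇑ka =ᵐ[μ] fun t => ((1 : ℂ) - (starRingEnd ℂ) a * fourier 1 t)⁻¹) (x : L2) :
    inner (𝕜 := ℂ) ka x
      = ∫ t, ((1 : ℂ) - a * fourier (-1) t)⁻¹ * (x : AddCircle T → ℂ) t ∂μ := by
  rw [MeasureTheory.L2.inner_def]
  refine integral_congr_ae ?_
  filter_upwards [hka] with t ht
  rw [RCLike.inner_apply', ht]
  congr 1
  rw [map_inv₀, map_sub, map_one, map_mul, Complex.conj_conj, ← fourier_neg]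

lemma f_neg_one_mem_H2m : (fourierLp 2 (-1 : ℤ) : L2) ∈ H2m := by
  apply mem_H2m_of_coeff
  intro n
  rw [← inner_fourierLp]
  exact orthonormal_fourier.2 (by omega)

lemma integral_f1_eq_zero {u : L2} (hu : u ∈ H2) :
    ∫ t, (fourier 1 t : ℂ) * (u : AddCircle T → ℂ) t ∂μ = 0 := by
  have h0 := inner_eq_zero_of_H2m f_neg_one_mem_H2m hu
  rw [MeasureTheory.L2.inner_def] at h0
  rw [← h0]
  refine integral_congr_ae ?_
  filter_upwards [coeFn_fourierLp 2 (-1 : ℤ)] with t ht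
  rw [RCLike.inner_apply', ht, ← fourier_neg]
  norm_num

lemma inner_ka_Mz {a : ℂ} (ha : ‖a‖ < 1) {ka : L2}
    (hka : ⇑ka =ᵐ[μ] fun t => ((1 : ℂ) - (starRingEnd ℂ) a * fourier 1 t)⁻¹)
    {u : L2} (hu : u ∈ H2) :
    inner (𝕜 := ℂ) ka (Mz u) = a * inner (𝕜 := ℂ) ka u := by
  rw [inner_ka_eq ha hka, inner_ka_eq ha hka]
  have hint1 : Integrable (fun t => (fourier 1 t : ℂ) * (u : AddCircle T → ℂ) t) μ :=
    (memL2_mul_of_bound (fourier 1).continuous.aestronglyMeasurable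
      (Filter.Eventually.of_forall fun t => le_of_eq (norm_fourier_apply 1 t))
      u).integrable one_le_two
  have hint2 : Integrable (fun t =>
      a * (((1 : ℂ) - a * fourier (-1) t)⁻¹ * (u : AddCircle T → ℂ) t)) μ :=
    ((memL2_mul_of_bound (cont_inv_den ha (-1)).aestronglyMeasurable
      (Filter.Eventually.of_forall fun t => inv_den_norm_le ha (-1) t)
      u).integrable one_le_two).const_mul a
  have hcongr : (fun t => ((1 : ℂ) - a * fourier (-1) t)⁻¹ * (Mz u : AddCircle T → ℂ) t)
      =ᵐ[μ] fun t => (fourier 1 t : ℂ) * (u : AddCircle T → ℂ) t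
        + a * (((1 : ℂ) - a * fourier (-1) t)⁻¹ * (u : AddCircle T → ℂ) t) := by
    filter_upwards [Mz_coeFn u] with t ht
    rw [ht]
    have hne := denom_ne ha (-1) t
    have h2 : ((1 : ℂ) - a * fourier (-1) t) * ((1 : ℂ) - a * fourier (-1) t)⁻¹ = 1 :=
      mul_inv_cancel₀ hne
    have h3 : (fourier 1 t : ℂ) * fourier (-1) t = 1 := by
      rw [fourier_mul, show (1 : ℤ) + -1 = 0 by norm_num]
      exact fourier_zero
    show ((1 : ℂ) - a * fourier (-1) t)⁻¹ * (fourier 1 t * (u : AddCircle T → ℂ) t) = _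
    linear_combination ((fourier 1 t : ℂ) * (u : AddCircle T → ℂ) t) * h2
      + (a * (u : AddCircle T → ℂ) t * ((1 : ℂ) - a * fourier (-1) t)⁻¹) * h3
  rw [integral_congr_ae hcongr, integral_add hint1 hint2, integral_const_mul,
    integral_f1_eq_zero hu, zero_add]

lemma Mz_km {a : ℂ} (ha : ‖a‖ < 1) {km : L2}
    (hkm : ⇑km =ᵐ[μ] fun t => (fourier (-1) t : ℂ) * (1 - a * fourier (-1) t)⁻¹) :
    Mz km = (fourierLp 2 (0 : ℤ) : L2) + a • km := by
  apply Lp.ext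
  filter_upwards [Mz_coeFn km, hkm, Lp.coeFn_add (fourierLp 2 (0 : ℤ)) (a • km),
    Lp.coeFn_smul a km, coeFn_fourierLp 2 (0 : ℤ)] with t h1 h2 h3 h4 h5
  rw [h1, h2, h3, Pi.add_apply, h5, h4, Pi.smul_apply, smul_eq_mul, h2, fourier_zero]
  have hne := denom_ne ha (-1) t
  have hinv : ((1 : ℂ) - a * fourier (-1) t) * ((1 : ℂ) - a * fourier (-1) t)⁻¹ = 1 :=
    mul_inv_cancel₀ hne
  have h3' : (fourier 1 t : ℂ) * fourier (-1) t = 1 := by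
    rw [fourier_mul, show (1 : ℤ) + -1 = 0 by norm_num]
    exact fourier_zero
  show (fourier 1 t : ℂ) * ((fourier (-1) t : ℂ) * ((1 : ℂ) - a * fourier (-1) t)⁻¹) = _
  linear_combination (((1 : ℂ) - a * fourier (-1) t)⁻¹) * h3' + hinv

end Aux16

/-- `Y = {u ⊕ β u(a) k : u ∈ H²}` is a closed subspace of `H² ⊕ H²₋`,
invariant under `S ⊕ S₊`, and nonsplitting; here `u(a) = ⟪k_a, u⟫` with `k_a` the
Szegő kernel and `k(e^{it}) = e^{-it}/(1 − a e^{-it}) ∈ H²₋`. -/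
theorem stmt16_example (a β : ℂ) (ha : ‖a‖ < 1) (hβ : β ≠ 0) (ka km : L2)
    (hka : ⇑ka =ᵐ[μ] fun t => (1 - (starRingEnd ℂ) a * fourier 1 t)⁻¹)
    (hkm : ⇑km =ᵐ[μ] fun t => (fourier (-1) t : ℂ) * (1 - a * fourier (-1) t)⁻¹)
    (Y : Set L2)
    (hY : Y = {y : L2 | ∃ u ∈ (H2 : Set L2),
        y = u + (β * inner (𝕜 := ℂ) ka u) • km}) :
    km ∈ H2m ∧
    (∃ M : Submodule ℂ L2, (M : Set L2) = Y) ∧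
    IsClosed Y ∧
    (∀ y ∈ Y, D y ∈ Y) ∧
    ¬ ∃ X X' : Set L2, X ⊆ (H2 : Set L2) ∧ X' ⊆ (H2m : Set L2) ∧
        Y = {y : L2 | ∃ x ∈ X, ∃ x' ∈ X', y = x + x'} := by
  have hkmm : km ∈ H2m := km_mem_H2m ha hkm
  have hmemY : ∀ y : L2, y ∈ Y ↔ ∃ u ∈ (H2 : Set L2),
      y = u + (β * inner (𝕜 := ℂ) ka u) • km := by
    intro y; rw [hY]; exact Iff.rfl
  -- the defining continuous linear map
  set F : L2 →L[ℂ] ℂ := β • ((innerSL ℂ ka).comp PplusC) with hF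
  set Tc : L2 →L[ℂ] L2 :=
    ContinuousLinearMap.id ℂ L2 - PplusC - F.smulRight km with hTc
  have hTc_apply : ∀ y : L2,
      Tc y = y - Pplus y - (β * inner (𝕜 := ℂ) ka (Pplus y)) • km := by
    intro y
    simp only [hTc, hF, ContinuousLinearMap.sub_apply, ContinuousLinearMap.id_apply,
      ContinuousLinearMap.smulRight_apply, ContinuousLinearMap.smul_apply,
      ContinuousLinearMap.coe_comp', Function.comp_apply, innerSL_apply_apply, smul_eq_mul,
      PplusC_apply]
  have hPy : ∀ (u : L2), u ∈ H2 → ∀ c : ℂ, Pplus (u + c • km) = u := by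
    intro u hu c
    rw [map_add, LinearMap.map_smul, Pplus_eq_self hu, Pplus_eq_zero hkmm, smul_zero,
      add_zero]
  have hYker : Y = ((LinearMap.ker (Tc : L2 →ₗ[ℂ] L2) : Submodule ℂ L2) : Set L2) := by
    ext y
    constructor
    · intro hy
      obtain ⟨u, hu, rfl⟩ := (hmemY _).mp hy
      have hP := hPy u hu (β * inner (𝕜 := ℂ) ka u)
      have : Tc (u + (β * inner (𝕜 := ℂ) ka u) • km) = 0 := by
        rw [hTc_apply, hP]
        abel
      exact this
    · intro hy
      have h0 : Tc y = 0 := hy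
      rw [hTc_apply] at h0
      refine (hmemY _).mpr ⟨Pplus y, Pplus_mem y, ?_⟩
      have h1 : y - (Pplus y + (β * inner (𝕜 := ℂ) ka (Pplus y)) • km) = 0 := by
        rw [← h0]; abel
      exact sub_eq_zero.mp h1
  refine ⟨hkmm, ⟨LinearMap.ker (Tc : L2 →ₗ[ℂ] L2), hYker.symm⟩, ?_, ?_, ?_⟩
  · -- closedness
    rw [hYker]
    exact isClosed_singleton.preimage Tc.continuous
  · -- invariance under D
    intro y hy
    obtain ⟨u, hu, rfl⟩ := (hmemY _).mp hy
    set c : ℂ := β * inner (𝕜 := ℂ) ka u with hc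
    have hPp := hPy u hu c
    have hPm : Pminus (u + c • km) = c • km := by
      rw [map_add, LinearMap.map_smul, Pminus_eq_zero hu, Pminus_eq_self hkmm, zero_add]
    have hf0 : (fourierLp 2 (0 : ℤ) : L2) ∈ H2 := by simpa using fourierLp_mem_H2 0
    have hD : D (u + c • km) = Mz u + (a * c) • km := by
      show Mz (Pplus (u + c • km)) + Pminus (Mz (Pminus (u + c • km))) = _
      rw [hPp, hPm, LinearMap.map_smul, Mz_km ha hkm, LinearMap.map_smul, map_add,
        Pminus_eq_zero hf0, LinearMap.map_smul, Pminus_eq_self hkmm, zero_add, smul_smul,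
        mul_comm c a]
    rw [hD]
    refine (hmemY _).mpr ⟨Mz u, Mz_mem_H2 hu, ?_⟩
    rw [inner_ka_Mz ha hka hu, hc, show β * (a * inner (𝕜 := ℂ) ka u)
      = a * (β * inner (𝕜 := ℂ) ka u) by ring]
  · -- nonsplitting
    rintro ⟨X, X', hX, hX', hsum⟩
    set u₀ : L2 := ↑(Submodule.orthogonalProjectionOnto H2 ka) with hu₀def
    have hu₀H : u₀ ∈ H2 := (Submodule.orthogonalProjectionOnto H2 ka).2
    have hkaH : ka ∉ H2m := ka_not_mem_H2m ha hka
    have hu₀ne : u₀ ≠ 0 := by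
      intro h
      apply hkaH
      have h2 : ka - u₀ ∈ H2ᗮ := Submodule.sub_starProjection_mem_orthogonal (K := H2) ka
      rw [h, sub_zero] at h2
      exact h2
    have hinner : inner (𝕜 := ℂ) ka u₀ = inner (𝕜 := ℂ) u₀ u₀ := by
      have h1 : inner (𝕜 := ℂ) (ka - u₀) u₀ = 0 :=
        Submodule.starProjection_inner_eq_zero ka u₀ hu₀H
      rw [inner_sub_left, sub_eq_zero] at h1
      exact h1
    have hinner_ne : inner (𝕜 := ℂ) ka u₀ ≠ 0 := by
      rw [hinner]
      exact inner_self_ne_zero.mpr hu₀ne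
    set c₀ : ℂ := β * inner (𝕜 := ℂ) ka u₀ with hc₀
    have hc₀ne : c₀ ≠ 0 := mul_ne_zero hβ hinner_ne
    have hy₀ : u₀ + c₀ • km ∈ Y := (hmemY _).mpr ⟨u₀, hu₀H, rfl⟩
    rw [hsum] at hy₀
    obtain ⟨x, hx, x', hx', heq⟩ := hy₀
    have hxu : x = u₀ := by
      have h4 := congrArg (fun z : L2 => Pplus z) heq
      rw [map_add, map_add, LinearMap.map_smul, Pplus_eq_self hu₀H, Pplus_eq_zero hkmm,
        smul_zero, add_zero, Pplus_eq_self (hX hx), Pplus_eq_zero (hX' hx'),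
        add_zero] at h4
      exact h4.symm
    have h0Y : (0 : L2) ∈ Y := (hmemY 0).mpr ⟨0, H2.zero_mem, by simp⟩
    rw [hsum] at h0Y
    obtain ⟨x₁, hx₁, x₁', hx₁', heq0⟩ := h0Y
    have hx₁0 : x₁ = 0 := by
      have h4 := congrArg (fun z : L2 => Pplus z) heq0
      rw [map_zero, map_add, Pplus_eq_self (hX hx₁), Pplus_eq_zero (hX' hx₁'),
        add_zero] at h4
      exact h4.symm
    have hx₁'0 : x₁' = 0 := by
      rw [hx₁0, zero_add] at heq0
      exact heq0.symm
    have hu₀Y : u₀ ∈ Y := by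
      rw [hsum]
      exact ⟨x, hx, x₁', hx₁', by rw [hx₁'0, add_zero, hxu]⟩
    obtain ⟨u, hu, hequ⟩ := (hmemY _).mp hu₀Y
    have huu : u = u₀ := by
      have h4 := congrArg (fun z : L2 => Pplus z) hequ
      rw [Pplus_eq_self hu₀H, hPy u hu _] at h4
      exact h4.symm
    rw [huu] at hequ
    have hsmul : c₀ • km = 0 := (left_eq_add.mp hequ).symm ▸ rfl
    rcases smul_eq_zero.mp hsmul with h | h
    · exact hc₀ne h
    · exact km_ne_zero ha hkm h

end SS
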